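/- Let F : ℝⁿ → ℝᵐ be continuously differentiable, let α_1, …, α_m > 0, and let d_BB be the Barzilai–Borwein descent direction at x for the weights α_1,…,α_m. Then: (i) x is Pareto critical if and only if d_BB = 0; (ii) if d_BB ≠ 0 then ⟨∇F_i(x), d_BB⟩ ≤ −α_i‖d_BB‖² < 0 for every i ∈ {1,…,m}, so d_BB is a descent direction for F at x. -/

import Mathlib

/-! Along a ray `t ↦ t • d` (`t ≥ 0`) the objective `φ` is the quadratic
`t * S + t ^ 2 * ‖d‖² / 2` with `S = max_i ⟨g_i, d⟩`. At a minimizer `d` the ray is optimal at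
`t = 1`, which forces `S ≤ -‖d‖²`: this is the descent estimate, and it makes a nonzero minimizer
a descent direction. If instead `0` is the minimizer, optimality at `t = 0` forces `S ≥ 0` for
every `d`, so no direction is a descent direction. -/

open scoped RealInnerProductSpace
open Filter Set Topology

/-- `φ_g(d) = max_{1 ≤ i ≤ m} ⟨g_i, d⟩ + ‖d‖²/2`. -/
noncomputable def phi {n m : ℕ} (g : Fin m → EuclideanSpace ℝ (Fin n))
    (d : EuclideanSpace ℝ (Fin n)) : ℝ :=
  (⨆ i, ⟪g i, d⟫) + ‖d‖ ^ 2 / 2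

/-- `x` is Pareto critical: no direction `d` with `⟨∇F_i(x), d⟩ < 0` for all `i`. -/
def ParetoCritical {n m : ℕ} (F : Fin m → EuclideanSpace ℝ (Fin n) → ℝ)
    (x : EuclideanSpace ℝ (Fin n)) : Prop :=
  ¬ ∃ d : EuclideanSpace ℝ (Fin n), ∀ i, ⟪gradient (F i) x, d⟫ < 0

theorem nonneg_of_forall_mem_Ioo_add_mul_nonneg {a b : ℝ}
    (h : ∀ t ∈ Ioo (0 : ℝ) 1, 0 ≤ a + t * b) : 0 ≤ a := by
  have hlim : Tendsto (fun t : ℝ => a + t * b) (𝓝[>] 0) (𝓝 a) := by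
    have : Tendsto (fun t : ℝ => a + t * b) (𝓝 0) (𝓝 (a + 0 * b)) :=
      (continuous_const.add (continuous_id.mul continuous_const)).tendsto 0
    simpa using this.mono_left nhdsWithin_le_nhds
  exact ge_of_tendsto hlim (by filter_upwards [Ioo_mem_nhdsGT one_pos] using h)

theorem iSup_inner_smul_right {E ι : Type*} [NormedAddCommGroup E] [InnerProductSpace ℝ E]
    (g : ι → E) (d : E) {t : ℝ} (ht : 0 ≤ t) :
    ⨆ i, ⟪g i, t • d⟫ = t * ⨆ i, ⟪g i, d⟫ := by
  simp_rw [real_inner_smul_right]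
  exact (Real.mul_iSup_of_nonneg ht _).symm

section phi

variable {n m : ℕ} (g : Fin m → EuclideanSpace ℝ (Fin n))

theorem phi_smul (d : EuclideanSpace ℝ (Fin n)) {t : ℝ} (ht : 0 ≤ t) :
    phi g (t • d) = t * (⨆ i, ⟪g i, d⟫) + t ^ 2 * (‖d‖ ^ 2 / 2) := by
  rw [phi, iSup_inner_smul_right g d ht, norm_smul, Real.norm_of_nonneg ht]
  ring

theorem phi_zero : phi g 0 = 0 := by
  simpa using phi_smul g 0 le_rfl

theorem iSup_inner_le_neg_sq_norm_of_isMin {d : EuclideanSpace ℝ (Fin n)}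
    (hmin : ∀ d', phi g d ≤ phi g d') : ⨆ i, ⟪g i, d⟫ ≤ -‖d‖ ^ 2 := by
  suffices 0 ≤ -((⨆ i, ⟪g i, d⟫) + ‖d‖ ^ 2) by linarith
  refine nonneg_of_forall_mem_Ioo_add_mul_nonneg (b := ‖d‖ ^ 2 / 2) fun t ht => ?_
  have h := hmin ((1 - t) • d)
  rw [phi_smul g d (by linarith [ht.2]), phi] at h
  nlinarith [ht.1]

theorem exists_inner_nonneg_of_isMin_zero [NeZero m] (hmin : ∀ d', phi g 0 ≤ phi g d')
    (d : EuclideanSpace ℝ (Fin n)) : ∃ i, 0 ≤ ⟪g i, d⟫ := by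
  have hsup : 0 ≤ ⨆ i, ⟪g i, d⟫ :=
    nonneg_of_forall_mem_Ioo_add_mul_nonneg (b := ‖d‖ ^ 2 / 2) fun t ht => by
      have h := hmin (t • d)
      rw [phi_zero, phi_smul g d ht.1.le] at h
      nlinarith [ht.1]
  obtain ⟨i, hi⟩ := exists_eq_ciSup_of_finite (f := fun i => ⟪g i, d⟫)
  exact ⟨i, hi ▸ hsup⟩

end phi

theorem stmt_12_general {n m : ℕ} (hm : 0 < m) (F : Fin m → EuclideanSpace ℝ (Fin n) → ℝ)
    (x : EuclideanSpace ℝ (Fin n))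
    (α : Fin m → ℝ) (hα : ∀ i, 0 < α i)
    (dBB : EuclideanSpace ℝ (Fin n))
    (hdBB : ∀ d' : EuclideanSpace ℝ (Fin n),
      phi (fun i => (α i)⁻¹ • gradient (F i) x) dBB ≤
        phi (fun i => (α i)⁻¹ • gradient (F i) x) d') :
    (ParetoCritical F x ↔ dBB = 0) ∧
      (dBB ≠ 0 → ∀ i, ⟪gradient (F i) x, dBB⟫ ≤ -(α i) * ‖dBB‖ ^ 2 ∧
        -(α i) * ‖dBB‖ ^ 2 < 0) := by
  have : NeZero m := ⟨hm.ne'⟩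
  set g : Fin m → EuclideanSpace ℝ (Fin n) := fun i => (α i)⁻¹ • gradient (F i) x
  have hg : ∀ i d, ⟪gradient (F i) x, d⟫ = α i * ⟪g i, d⟫ := fun i d => by
    rw [real_inner_smul_left, mul_inv_cancel_left₀ (hα i).ne']
  have descent : dBB ≠ 0 → ∀ i, ⟪gradient (F i) x, dBB⟫ ≤ -(α i) * ‖dBB‖ ^ 2 ∧
      -(α i) * ‖dBB‖ ^ 2 < 0 := fun hne i => by
    have hgi : ⟪g i, dBB⟫ ≤ -‖dBB‖ ^ 2 :=
      (le_ciSup (finite_range _).bddAbove i).trans (iSup_inner_le_neg_sq_norm_of_isMin g hdBB)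
    have hnorm : 0 < ‖dBB‖ ^ 2 := by positivity
    refine ⟨?_, by nlinarith [hα i]⟩
    rw [hg]
    nlinarith [hα i]
  refine ⟨⟨fun hcrit => ?_, fun h0 => ?_⟩, descent⟩
  · by_contra hne
    exact hcrit ⟨dBB, fun i => (descent hne i).1.trans_lt (descent hne i).2⟩
  · rintro ⟨d, hd⟩
    obtain ⟨i, hi⟩ := exists_inner_nonneg_of_isMin_zero g (h0 ▸ hdBB) d
    have hneg := hd i
    rw [hg] at hneg
    nlinarith [hα i]

theorem stmt_12 {n m : ℕ} (hm : 0 < m) (F : Fin m → EuclideanSpace ℝ (Fin n) → ℝ)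
    (hF : ∀ i, ContDiff ℝ 1 (F i)) (x : EuclideanSpace ℝ (Fin n))
    (α : Fin m → ℝ) (hα : ∀ i, 0 < α i)
    (dBB : EuclideanSpace ℝ (Fin n))
    (hdBB : ∀ d' : EuclideanSpace ℝ (Fin n),
      phi (fun i => (α i)⁻¹ • gradient (F i) x) dBB ≤
        phi (fun i => (α i)⁻¹ • gradient (F i) x) d') :
    (ParetoCritical F x ↔ dBB = 0) ∧
      (dBB ≠ 0 → ∀ i, ⟪gradient (F i) x, dBB⟫ ≤ -(α i) * ‖dBB‖ ^ 2 ∧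
        -(α i) * ‖dBB‖ ^ 2 < 0) :=
  stmt_12_general hm F x α hα dBB hdBB
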